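/- Gyration identity for translated differences: for z, u, v ∈ ℝ^n where the κ-additions are defined, -(z ⊕_κ u) ⊕_κ (z ⊕_κ v) = gyr[z,u]((-u) ⊕_κ v). -/

import Mathlib

/-!
By definition `gyr[z,u] w = -(z ⊕ u) ⊕ (z ⊕ (u ⊕ w))`, so for `w = (-u) ⊕ v` the identity is the
left cancellation law `u ⊕ ((-u) ⊕ v) = v`. That law is a computation in the plane spanned by
`u` and `v`: with `D` the denominator of `(-u) ⊕ v` and `b = 1 + κ‖u‖²`, the denominator of
`u ⊕ ((-u) ⊕ v)` is `b² / D`, and the `u`-components of the two additions cancel.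
-/

open scoped RealInnerProductSpace

noncomputable def kdenom {n : ℕ} (κ : ℝ) (x y : EuclideanSpace ℝ (Fin n)) : ℝ :=
  1 - 2 * κ * ⟪x, y⟫ + κ ^ 2 * ‖x‖ ^ 2 * ‖y‖ ^ 2

noncomputable def kadd {n : ℕ} (κ : ℝ) (x y : EuclideanSpace ℝ (Fin n)) :
    EuclideanSpace ℝ (Fin n) :=
  (kdenom κ x y)⁻¹ •
    ((1 - 2 * κ * ⟪x, y⟫ - κ * ‖y‖ ^ 2) • x + (1 + κ * ‖x‖ ^ 2) • y)

noncomputable def kgyr {n : ℕ} (κ : ℝ) (u v w : EuclideanSpace ℝ (Fin n)) :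
    EuclideanSpace ℝ (Fin n) :=
  kadd κ (-(kadd κ u v)) (kadd κ u (kadd κ v w))

section KAdd

variable {n : ℕ} (κ : ℝ) (x y z : EuclideanSpace ℝ (Fin n))

theorem kdenom_neg_left :
    kdenom κ (-x) y = 1 + 2 * κ * ⟪x, y⟫ + κ ^ 2 * ‖x‖ ^ 2 * ‖y‖ ^ 2 := by
  simp only [kdenom, inner_neg_left, norm_neg]
  ring

theorem inner_kadd_right : ⟪z, kadd κ x y⟫ = (kdenom κ x y)⁻¹ *
    ((1 - 2 * κ * ⟪x, y⟫ - κ * ‖y‖ ^ 2) * ⟪z, x⟫ + (1 + κ * ‖x‖ ^ 2) * ⟪z, y⟫) := by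
  simp only [kadd, inner_smul_right, inner_add_right]

theorem norm_sq_kadd (h : kdenom κ x y ≠ 0) :
    ‖kadd κ x y‖ ^ 2 = (‖x‖ ^ 2 + 2 * ⟪x, y⟫ + ‖y‖ ^ 2) / kdenom κ x y := by
  rw [← real_inner_self_eq_norm_sq, inner_kadd_right, kadd]
  simp only [inner_smul_left, inner_add_left, real_inner_self_eq_norm_sq, real_inner_comm x y,
    RCLike.conj_to_real]
  field_simp
  unfold kdenom
  ring

variable {κ x y}

theorem kdenom_kadd_neg_left (h : kdenom κ (-x) y ≠ 0) :
    kdenom κ x (kadd κ (-x) y) = (1 + κ * ‖x‖ ^ 2) ^ 2 / kdenom κ (-x) y := by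
  rw [eq_div_iff h]
  conv_lhs => rw [kdenom, inner_kadd_right, norm_sq_kadd κ _ _ h]
  simp only [inner_neg_left, inner_neg_right, norm_neg, real_inner_self_eq_norm_sq]
  field_simp
  rw [kdenom_neg_left]
  ring

theorem kadd_neg_cancel_left (h₁ : kdenom κ (-x) y ≠ 0)
    (h₂ : kdenom κ x (kadd κ (-x) y) ≠ 0) : kadd κ x (kadd κ (-x) y) = y := by
  have hcoef : 1 - 2 * κ * ⟪x, kadd κ (-x) y⟫ - κ * ‖kadd κ (-x) y‖ ^ 2 =
      (1 + κ * ‖x‖ ^ 2) * (1 + 2 * κ * ⟪x, y⟫ - κ * ‖y‖ ^ 2) / kdenom κ (-x) y := by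
    rw [eq_div_iff h₁, inner_kadd_right, norm_sq_kadd κ _ _ h₁]
    simp only [inner_neg_left, inner_neg_right, norm_neg, real_inner_self_eq_norm_sq]
    field_simp
    rw [kdenom_neg_left]
    ring
  have hden := kdenom_kadd_neg_left h₁
  have hb : 1 + κ * ‖x‖ ^ 2 ≠ 0 := by
    rintro hb
    simp [hden, hb] at h₂
  rw [kadd, hcoef, hden]
  conv_lhs => enter [2, 2, 2]; rw [kadd]
  simp only [inner_neg_left, norm_neg]
  match_scalars <;> field_simp
  ring

end KAdd

theorem kadd_translated_diff_general {n : ℕ} (κ : ℝ) (z u v : EuclideanSpace ℝ (Fin n))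
    (h₄ : kdenom κ (-u) v ≠ 0)
    (h₅ : kdenom κ u (kadd κ (-u) v) ≠ 0) :
    kadd κ (-(kadd κ z u)) (kadd κ z v) = kgyr κ z u (kadd κ (-u) v) := by
  rw [kgyr, kadd_neg_cancel_left h₄ h₅]

/-- Gyration identity for translated differences:
`-(z ⊕_κ u) ⊕_κ (z ⊕_κ v) = gyr[z,u]((-u) ⊕_κ v)`. -/
theorem kadd_translated_diff {n : ℕ} (κ : ℝ) (z u v : EuclideanSpace ℝ (Fin n))
    (h₁ : kdenom κ z u ≠ 0) (h₂ : kdenom κ z v ≠ 0)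
    (h₃ : kdenom κ (-(kadd κ z u)) (kadd κ z v) ≠ 0)
    (h₄ : kdenom κ (-u) v ≠ 0)
    (h₅ : kdenom κ u (kadd κ (-u) v) ≠ 0)
    (h₆ : kdenom κ z (kadd κ u (kadd κ (-u) v)) ≠ 0)
    (h₇ : kdenom κ (-(kadd κ z u)) (kadd κ z (kadd κ u (kadd κ (-u) v))) ≠ 0) :
    kadd κ (-(kadd κ z u)) (kadd κ z v) = kgyr κ z u (kadd κ (-u) v) :=
  kadd_translated_diff_general κ z u v h₄ h₅
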